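/- arXiv:1302.0404 — 8 statements merged into one kernel-verified Lean document; each statement's English description precedes it below -/
import Mathlib

section
/- Let G be a P5-free graph (no induced path on 5 vertices), and let X1, X2 be disjoint connected subsets of V(G) that are anticomplete to each other (no edges between X1 and X2). Then no vertex v ∈ V(G)\(X1 ∪ X2) is mixed on both X1 and X2. -/
open SimpleGraph

variable {V : Type*} {W : Type*}

/-- A vertex `v` is *mixed* on a set `X` if it has both a neighbor and a non-neighbor in `X`. -/
def Mixed (G : SimpleGraph V) (v : V) (X : Set V) : Prop :=
  (∃ x ∈ X, G.Adj v x) ∧ (∃ x ∈ X, ¬ G.Adj v x)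

/-- A homogeneous set: `1 < |X| < |V(G)|` and no outside vertex is mixed on `X`. -/
def IsHomogeneousSet [Fintype V] (G : SimpleGraph V) (X : Set V) : Prop :=
  1 < X.ncard ∧ X.ncard < Fintype.card V ∧ ∀ v ∉ X, ¬ Mixed G v X

/-- A graph is prime if it has at least four vertices and no homogeneous set. -/
def IsPrimeGraph [Fintype V] (G : SimpleGraph V) : Prop :=
  4 ≤ Fintype.card V ∧ ∀ X : Set V, ¬ IsHomogeneousSet G X

/-- A vertex is simplicial if its neighborhood is a clique. -/
def Simplicial (G : SimpleGraph V) (v : V) : Prop :=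
  G.IsClique (G.neighborSet v)

/-- A vertex is antisimplicial if its non-neighborhood is a stable set. -/
def Antisimplicial (G : SimpleGraph V) (v : V) : Prop :=
  Gᶜ.IsClique {u | ¬ G.Adj v u}

/-- `G` is `H`-free: there is no induced copy of `H` in `G`. -/
def HFree (H : SimpleGraph W) (G : SimpleGraph V) : Prop :=
  ¬ Nonempty (H ↪g G)

lemma walk_find (G : SimpleGraph V) {X : Set V} (v : V) :
    ∀ {p q : ↥X} (_ : (G.induce X).Walk p q), G.Adj v p → ¬ G.Adj v q →
    ∃ a b : ↥X, G.Adj a b ∧ G.Adj v a ∧ ¬ G.Adj v b := by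
  intro p q w
  induction w with
  | nil => intro h1 h2; exact absurd h1 h2
  | @cons a b c h w ih =>
    intro ha hc
    by_cases hb : G.Adj v b
    · exact ih hb hc
    · exact ⟨a, b, h, ha, hb⟩

lemma exists_edge_mixed (G : SimpleGraph V) {X : Set V} (hc : (G.induce X).Connected)
    (v : V) (h : Mixed G v X) :
    ∃ a ∈ X, ∃ b ∈ X, G.Adj a b ∧ G.Adj v a ∧ ¬ G.Adj v b := by
  obtain ⟨⟨x, hx, hvx⟩, ⟨y, hy, hvy⟩⟩ := h
  obtain ⟨w⟩ := hc.preconnected ⟨x, hx⟩ ⟨y, hy⟩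
  obtain ⟨a, b, hab, hva, hvb⟩ := walk_find G v w hvx hvy
  exact ⟨a, a.2, b, b.2, hab, hva, hvb⟩

theorem stmt3 (G : SimpleGraph V) (hfree : HFree (pathGraph 5) G)
    (X1 X2 : Set V) (hdisj : Disjoint X1 X2)
    (hc1 : (G.induce X1).Connected) (hc2 : (G.induce X2).Connected)
    (hanti : ∀ x ∈ X1, ∀ y ∈ X2, ¬ G.Adj x y)
    (v : V) (hv : v ∉ X1 ∪ X2) :
    ¬ (Mixed G v X1 ∧ Mixed G v X2) := by
  rintro ⟨h1, h2⟩
  obtain ⟨a1, ha1, b1, hb1, hab1, hva1, hvb1⟩ := exists_edge_mixed G hc1 v h1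
  obtain ⟨a2, ha2, b2, hb2, hab2, hva2, hvb2⟩ := exists_edge_mixed G hc2 v h2
  have hvX1 : v ∉ X1 := fun h => hv (Or.inl h)
  have hvX2 : v ∉ X2 := fun h => hv (Or.inr h)
  have hD : ∀ x ∈ X1, ∀ y ∈ X2, x ≠ y := fun x hx y hy h =>
    hdisj.ne_of_mem hx hy h
  let f : Fin 5 → V := ![b1, a1, v, a2, b2]
  have hinj : Function.Injective f := by
    intro i j hij
    fin_cases i <;> fin_cases j <;> simp_all [f] <;>
      first
      | rfl
      | (exfalso; first
          | exact hab1.ne hij.symm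
          | exact hab1.ne hij
          | exact hab2.ne hij.symm
          | exact hab2.ne hij
          | exact hvX1 (hij ▸ hb1)
          | exact hvX1 (hij ▸ ha1)
          | exact hvX2 (hij ▸ ha2)
          | exact hvX2 (hij ▸ hb2)
          | exact hvX1 (hij.symm ▸ hb1)
          | exact hvX1 (hij.symm ▸ ha1)
          | exact hvX2 (hij.symm ▸ ha2)
          | exact hvX2 (hij.symm ▸ hb2)
          | exact hD _ hb1 _ ha2 hij
          | exact hD _ hb1 _ hb2 hij
          | exact hD _ ha1 _ ha2 hij
          | exact hD _ ha1 _ hb2 hij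
          | exact hD _ hb1 _ ha2 hij.symm
          | exact hD _ hb1 _ hb2 hij.symm
          | exact hD _ ha1 _ ha2 hij.symm
          | exact hD _ ha1 _ hb2 hij.symm)
  refine hfree ⟨⟨⟨f, hinj⟩, ?_⟩⟩
  intro i j
  fin_cases i <;> fin_cases j <;>
    simp [f, pathGraph_adj, hab1.symm, hab1, hab2, hab2.symm, hva1, hva1.symm,
      hva2, hva2.symm, hvb1, hvb2, G.adj_comm,
      hanti _ hb1 _ ha2, hanti _ hb1 _ hb2, hanti _ ha1 _ ha2, hanti _ ha1 _ hb2,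
      fun h => hvb1 (G.adj_comm _ _ |>.mp h), fun h => hvb2 (G.adj_comm _ _ |>.mp h)] <;>
    decide
end

section
/- Let G be a graph whose complement is P5-free, and let X1, X2 be disjoint anticonnected subsets of V(G) that are complete to each other (every vertex of X1 is adjacent to every vertex of X2). Then no vertex v ∈ V(G)\(X1 ∪ X2) is mixed on both X1 and X2. -/
open SimpleGraph

variable {V : Type*} {W : Type*}

/-! Walking in `Gᶜ` inside the anticonnected set `Xᵢ` from a non-neighbour of `v` to a
neighbour yields a non-edge `aᵢbᵢ` of `G` with `v` nonadjacent to `aᵢ` and adjacent to `bᵢ`.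
Since `X₁` is complete to `X₂`, the vertices `b₁ a₁ v a₂ b₂` then induce a `P₅` in `Gᶜ`;
they are automatically distinct, because the vertices of `P₅` have distinct neighbourhoods. -/

lemma exists_compl_adj_of_mixed {G : SimpleGraph V} {X : Set V}
    (hX : ((G.induce X)ᶜ).Preconnected) {v : V} (hv : v ∉ X) (h : Mixed G v X) :
    ∃ a ∈ X, ∃ b ∈ X, Gᶜ.Adj a b ∧ Gᶜ.Adj v a ∧ G.Adj v b := by
  obtain ⟨⟨b, hb, hvb⟩, ⟨a, ha, hva⟩⟩ := h
  obtain ⟨p⟩ := hX ⟨a, ha⟩ ⟨b, hb⟩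
  obtain ⟨d, -, hd₁, hd₂⟩ := p.exists_boundary_dart {x | ¬ G.Adj v x} hva (not_not.2 hvb)
  refine ⟨d.fst, d.fst.2, d.snd, d.snd.2, ?_, ?_, not_not.1 hd₂⟩
  · exact (G.compl_adj _ _).2 ⟨Subtype.coe_injective.ne d.adj.ne, d.adj.2⟩
  · exact (G.compl_adj _ _).2 ⟨fun e => hv (e ▸ d.fst.2), hd₁⟩

lemma pathGraph_five_eq_of_adj_iff {i j : Fin 5}
    (h : ∀ k, (pathGraph 5).Adj i k ↔ (pathGraph 5).Adj j k) : i = j := by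
  simp only [pathGraph_adj] at h
  revert i j
  decide

lemma not_hFree_pathGraph_five {H : SimpleGraph V} {x₀ x₁ x₂ x₃ x₄ : V}
    (h₀₁ : H.Adj x₀ x₁) (h₁₂ : H.Adj x₁ x₂) (h₂₃ : H.Adj x₂ x₃) (h₃₄ : H.Adj x₃ x₄)
    (n₀₂ : ¬ H.Adj x₀ x₂) (n₀₃ : ¬ H.Adj x₀ x₃) (n₀₄ : ¬ H.Adj x₀ x₄)
    (n₁₃ : ¬ H.Adj x₁ x₃) (n₁₄ : ¬ H.Adj x₁ x₄) (n₂₄ : ¬ H.Adj x₂ x₄) :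
    ¬ HFree (pathGraph 5) H := by
  let f : Fin 5 → V := ![x₀, x₁, x₂, x₃, x₄]
  have hf : ∀ i j, H.Adj (f i) (f j) ↔ (pathGraph 5).Adj i j := by
    intro i j
    fin_cases i <;> fin_cases j <;>
      simp [f, pathGraph_adj, h₀₁, h₁₂, h₂₃, h₃₄, h₀₁.symm, h₁₂.symm, h₂₃.symm, h₃₄.symm,
        n₀₂, n₀₃, n₀₄, n₁₃, n₁₄, n₂₄, mt H.adj_symm n₀₂, mt H.adj_symm n₀₃,
        mt H.adj_symm n₀₄, mt H.adj_symm n₁₃, mt H.adj_symm n₁₄, mt H.adj_symm n₂₄]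
  have hinj : f.Injective := fun i j e =>
    pathGraph_five_eq_of_adj_iff fun k => by rw [← hf, ← hf, e]
  exact fun hfree => hfree ⟨⟨⟨f, hinj⟩, hf _ _⟩⟩

theorem stmt4_general (G : SimpleGraph V) (hfree : HFree (pathGraph 5) Gᶜ)
    (X1 X2 : Set V)
    (hc1 : ((G.induce X1)ᶜ).Connected) (hc2 : ((G.induce X2)ᶜ).Connected)
    (hcomp : ∀ x ∈ X1, ∀ y ∈ X2, G.Adj x y)
    (v : V) (hv : v ∉ X1 ∪ X2) :
    ¬ (Mixed G v X1 ∧ Mixed G v X2) := by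
  rintro ⟨m1, m2⟩
  obtain ⟨a1, ha1, b1, hb1, hab1, hva1, hvb1⟩ :=
    exists_compl_adj_of_mixed hc1.preconnected (fun h => hv (Or.inl h)) m1
  obtain ⟨a2, ha2, b2, hb2, hab2, hva2, hvb2⟩ :=
    exists_compl_adj_of_mixed hc2.preconnected (fun h => hv (Or.inr h)) m2
  have hcompl : ∀ x ∈ X1, ∀ y ∈ X2, ¬ Gᶜ.Adj x y := fun x hx y hy h => h.2 (hcomp x hx y hy)
  exact not_hFree_pathGraph_five hab1.symm hva1.symm hva2 hab2
    (fun h => h.2 hvb1.symm) (hcompl b1 hb1 a2 ha2) (hcompl b1 hb1 b2 hb2)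
    (hcompl a1 ha1 a2 ha2) (hcompl a1 ha1 b2 hb2) (fun h => h.2 hvb2) hfree

theorem stmt4 (G : SimpleGraph V) (hfree : HFree (pathGraph 5) Gᶜ)
    (X1 X2 : Set V) (hdisj : Disjoint X1 X2)
    (hc1 : ((G.induce X1)ᶜ).Connected) (hc2 : ((G.induce X2)ᶜ).Connected)
    (hcomp : ∀ x ∈ X1, ∀ y ∈ X2, G.Adj x y)
    (v : V) (hv : v ∉ X1 ∪ X2) :
    ¬ (Mixed G v X1 ∧ Mixed G v X2) :=
  stmt4_general G hfree X1 X2 hc1 hc2 hcomp v hv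
end

section
/- Let G be a graph whose complement is P5-free, let u, v be non-adjacent vertices of G, and let A be an anticonnected subset of N(u) ∩ N(v). Then no vertex w ∈ V(G)\(A ∪ {u,v}) is mixed on both A and {u,v}. -/
open SimpleGraph

variable {V : Type*} {W : Type*}

lemma find_edge {G : SimpleGraph V} {A : Set V} (w : V) :
    ∀ {p q : A}, ((G.induce A)ᶜ).Walk p q → G.Adj w p → ¬ G.Adj w q →
    ∃ a ∈ A, ∃ b ∈ A, ¬ G.Adj (a:V) b ∧ G.Adj w a ∧ ¬ G.Adj w b := by
  intro p q walk
  induction walk with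
  | nil => intro h1 h2; exact absurd h1 h2
  | @cons p r q h _ ih =>
    intro hp hq
    by_cases hr : G.Adj w r
    · exact ih hr hq
    · rw [compl_adj] at h
      refine ⟨p, p.2, r, r.2, ?_, hp, hr⟩
      intro hadj
      exact h.2 ((comap_adj (G := G) (f := fun x : A => (x:V))).mpr hadj)

lemma buildP5 {G : SimpleGraph V} (hfree : HFree (pathGraph 5) Gᶜ)
    (u v w b a : V) (huv : ¬ G.Adj u v) (hvw : ¬ G.Adj v w)
    (hwb : ¬ G.Adj w b) (hba : ¬ G.Adj b a)
    (huw : G.Adj u w) (hub : G.Adj u b) (hua : G.Adj u a)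
    (hvb : G.Adj v b) (hva : G.Adj v a) (hwa : G.Adj w a)
    (nuv : u ≠ v) (nvw : v ≠ w) (nwb : w ≠ b) (nba : b ≠ a) : False := by
  apply hfree
  have huw' := huw.symm; have hub' := hub.symm; have hua' := hua.symm
  have hvb' := hvb.symm; have hva' := hva.symm; have hwa' := hwa.symm
  have nuw := huw.ne; have nub := hub.ne; have nua := hua.ne
  have nvb := hvb.ne; have nva := hva.ne; have nwa := hwa.ne
  refine ⟨⟨⟨![u, v, w, b, a], ?_⟩, ?_⟩⟩
  · intro i j hij
    fin_cases i <;> fin_cases j <;> simp_all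
  · intro i j
    fin_cases i <;> fin_cases j <;>
      simp [pathGraph_adj, compl_adj] <;> tauto

theorem stmt5 (G : SimpleGraph V) (hfree : HFree (pathGraph 5) Gᶜ)
    (u v : V) (huv : u ≠ v) (hnadj : ¬ G.Adj u v)
    (A : Set V) (hA : A ⊆ G.neighborSet u ∩ G.neighborSet v)
    (hanticonn : ((G.induce A)ᶜ).Connected)
    (w : V) (hw : w ∉ A ∪ {u, v}) :
    ¬ (Mixed G w A ∧ Mixed G w {u, v}) := by
  simp only [Set.mem_union, Set.mem_insert_iff, Set.mem_singleton_iff, not_or] at hw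
  obtain ⟨hwA, hwu, hwv⟩ := hw
  have huA : u ∉ A := fun h => G.irrefl (hA h).1
  have hvA : v ∉ A := fun h => G.irrefl (hA h).2
  rintro ⟨⟨⟨x, hxA, hwx⟩, ⟨y, hyA, hwy⟩⟩, ⟨p, hp, hwp⟩, ⟨q, hq, hwq⟩⟩
  obtain ⟨wk⟩ := hanticonn.preconnected ⟨x, hxA⟩ ⟨y, hyA⟩
  obtain ⟨a, haA, b, hbA, hab, hwa, hwb⟩ := find_edge w wk hwx hwy
  have nba : b ≠ a := by rintro rfl; exact hwb hwa
  have nwb : w ≠ b := by rintro rfl; exact hwA hbA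
  have hba : ¬ G.Adj b a := fun h => hab h.symm
  have hua : G.Adj u a := (hA haA).1
  have hva : G.Adj v a := (hA haA).2
  have hub : G.Adj u b := (hA hbA).1
  have hvb : G.Adj v b := (hA hbA).2
  have hp' : p = u ∨ p = v := by simpa using hp
  have hq' : q = u ∨ q = v := by simpa using hq
  rcases hp' with h | h <;> rw [h] at hwp <;> rcases hq' with h' | h' <;> rw [h'] at hwq
  · exact hwq hwp
  · exact buildP5 hfree u v w b a hnadj (fun h => hwq h.symm) hwb hba hwp.symm
      hub hua hvb hva hwa huv (Ne.symm hwv) nwb nba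
  · exact buildP5 hfree v u w b a (fun h => hnadj h.symm) (fun h => hwq h.symm)
      hwb hba hwp.symm hvb hva hub hua hwa huv.symm (Ne.symm hwu) nwb nba
  · exact hwq hwp
end

section
/- Let G be a {P5, P5-bar}-free graph, let u, v, w be three pairwise non-adjacent vertices such that w is mixed on an anticonnected subset A of N(u) ∩ N(v). Then no vertex z ∈ N(w)\(A ∪ {u,v}) is mixed on {u,v}. -/
open SimpleGraph

variable {V : Type*} {W : Type*}

lemma pg_adj {i j : Fin 5} (h : i.val + 1 = j.val ∨ j.val + 1 = i.val) :
    (pathGraph 5).Adj i j := pathGraph_adj.mpr h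

lemma pg_nadj {i j : Fin 5} (h : ¬(i.val + 1 = j.val ∨ j.val + 1 = i.val)) :
    ¬(pathGraph 5).Adj i j := fun a => h (pathGraph_adj.mp a)

lemma pgc_adj {i j : Fin 5} (hne : i ≠ j)
    (h : ¬(i.val + 1 = j.val ∨ j.val + 1 = i.val)) :
    ((pathGraph 5)ᶜ).Adj i j := ⟨hne, fun a => h (pathGraph_adj.mp a)⟩

lemma pgc_nadj {i j : Fin 5} (h : i.val + 1 = j.val ∨ j.val + 1 = i.val) :
    ¬((pathGraph 5)ᶜ).Adj i j := fun a => a.2 (pathGraph_adj.mpr h)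

lemma mixed_anticonn' (G : SimpleGraph V) (A : Set V)
    (hanticonn : ((G.induce A)ᶜ).Connected) (w : V)
    (h1 : ∃ x ∈ A, G.Adj w x) (h2 : ∃ x ∈ A, ¬ G.Adj w x) :
    ∃ a ∈ A, ∃ b ∈ A, G.Adj w a ∧ ¬ G.Adj w b ∧ ¬ G.Adj a b := by
  obtain ⟨a, haA, hwa⟩ := h1
  obtain ⟨b, hbA, hwb⟩ := h2
  obtain ⟨p⟩ := hanticonn.preconnected ⟨a, haA⟩ ⟨b, hbA⟩
  obtain ⟨d, _, hd1, hd2⟩ := p.exists_boundary_dart {x : ↑A | G.Adj w ↑x} hwa hwb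
  have hadj := d.adj
  refine ⟨d.fst, d.fst.2, d.snd, d.snd.2, hd1, hd2, ?_⟩
  simp only [compl_adj, comap_adj, Function.Embedding.coe_subtype] at hadj
  exact hadj.2

lemma p5_embed (G : SimpleGraph V) (x0 x1 x2 x3 x4 : V)
    (h01 : G.Adj x0 x1) (h12 : G.Adj x1 x2) (h23 : G.Adj x2 x3) (h34 : G.Adj x3 x4)
    (h02 : ¬G.Adj x0 x2) (h03 : ¬G.Adj x0 x3) (h04 : ¬G.Adj x0 x4)
    (h13 : ¬G.Adj x1 x3) (h14 : ¬G.Adj x1 x4) (h24 : ¬G.Adj x2 x4) :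
    Nonempty (pathGraph 5 ↪g G) := by
  have n01 := h01.ne
  have n12 := h12.ne
  have n23 := h23.ne
  have n34 := h34.ne
  have n02 : x0 ≠ x2 := by rintro rfl; exact h03 h23
  have n03 : x0 ≠ x3 := by rintro rfl; exact h04 h34
  have n04 : x0 ≠ x4 := by rintro rfl; exact h14 h01.symm
  have n13 : x1 ≠ x3 := by rintro rfl; exact h14 h34
  have n14 : x1 ≠ x4 := by rintro rfl; exact h04 h01
  have n24 : x2 ≠ x4 := by rintro rfl; exact h14 h12
  let f : Fin 5 → V := ![x0, x1, x2, x3, x4]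
  have hinj : Function.Injective f := by
    intro i j hij
    fin_cases i <;> fin_cases j <;>
      first
        | rfl
        | exact absurd hij (by assumption)
        | exact absurd hij.symm (by assumption)
  refine ⟨⟨⟨f, hinj⟩, ?_⟩⟩
  intro i j
  fin_cases i <;> fin_cases j <;>
    first
      | exact iff_of_false G.irrefl (pg_nadj (by decide))
      | exact iff_of_true (by assumption) (pg_adj (by decide))
      | exact iff_of_true (Adj.symm (by assumption)) (pg_adj (by decide))
      | exact iff_of_false (by assumption) (pg_nadj (by decide))
      | exact iff_of_false (fun hh => absurd hh.symm (by assumption)) (pg_nadj (by decide))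

lemma p5c_embed (G : SimpleGraph V) (x0 x1 x2 x3 x4 : V)
    (d01 : x0 ≠ x1) (d12 : x1 ≠ x2) (d23 : x2 ≠ x3) (d34 : x3 ≠ x4)
    (h01 : ¬G.Adj x0 x1) (h12 : ¬G.Adj x1 x2) (h23 : ¬G.Adj x2 x3) (h34 : ¬G.Adj x3 x4)
    (h02 : G.Adj x0 x2) (h03 : G.Adj x0 x3) (h04 : G.Adj x0 x4)
    (h13 : G.Adj x1 x3) (h14 : G.Adj x1 x4) (h24 : G.Adj x2 x4) :
    Nonempty ((pathGraph 5)ᶜ ↪g G) := by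
  have n02 := h02.ne
  have n03 := h03.ne
  have n04 := h04.ne
  have n13 := h13.ne
  have n14 := h14.ne
  have n24 := h24.ne
  let f : Fin 5 → V := ![x0, x1, x2, x3, x4]
  have hinj : Function.Injective f := by
    intro i j hij
    fin_cases i <;> fin_cases j <;>
      first
        | rfl
        | exact absurd hij (by assumption)
        | exact absurd hij.symm (by assumption)
  refine ⟨⟨⟨f, hinj⟩, ?_⟩⟩
  intro i j
  fin_cases i <;> fin_cases j <;>
    first
      | exact iff_of_false G.irrefl (fun a => a.1 rfl)
      | exact iff_of_true (by assumption) (pgc_adj (by decide) (by decide))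
      | exact iff_of_true (Adj.symm (by assumption)) (pgc_adj (by decide) (by decide))
      | exact iff_of_false (by assumption) (pgc_nadj (by decide))
      | exact iff_of_false (fun hh => absurd hh.symm (by assumption)) (pgc_nadj (by decide))

lemma core (G : SimpleGraph V)
    (hfree1 : HFree (pathGraph 5) G) (hfree2 : HFree ((pathGraph 5)ᶜ) G)
    (u v w a b z : V)
    (huw : u ≠ w) (hvw : v ≠ w) (hzv' : z ≠ v)
    (hnuv : ¬G.Adj u v) (hnuw : ¬G.Adj u w) (hnvw : ¬G.Adj v w)
    (hua : G.Adj u a) (hva : G.Adj v a) (hub : G.Adj u b) (hvb : G.Adj v b)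
    (hwa : G.Adj w a) (hwb : ¬G.Adj w b) (hab : ¬G.Adj a b)
    (hwz : G.Adj w z) (hzu : G.Adj z u) (hzv : ¬G.Adj z v)
    (hza : z ≠ a) (hzb : z ≠ b) : False := by
  by_cases ha : G.Adj z a <;> by_cases hb : G.Adj z b
  · -- z~a, z~b : P5-bar on z,v,w,b,a
    exact hfree2 (p5c_embed G z v w b a
      hzv' hvw (by rintro rfl; exact hnuw hub) (by rintro rfl; exact hwb hwa)
      hzv hnvw hwb (fun h => hab h.symm)
      hwz.symm hb ha hvb hva hwa)
  · -- z~a, ¬z~b : P5 on v,b,u,z,w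
    exact hfree1 (p5_embed G v b u z w
      hvb hub.symm hzu.symm hwz.symm
      (fun h => hnuv h.symm) (fun h => hzv h.symm) hnvw
      (fun h => hb h.symm) (fun h => hwb h.symm) hnuw)
  · -- ¬z~a, z~b : P5-bar on z,a,b,w,u
    exact hfree2 (p5c_embed G z a b w u
      hza (by rintro rfl; exact hwb hwa) (by rintro rfl; exact hnuw hub) huw.symm
      ha hab (fun h => hwb h.symm) (fun h => hnuw h.symm)
      hb hwz.symm hzu hwa.symm hua.symm hub.symm)
  · -- ¬z~a, ¬z~b : P5 on b,v,a,w,z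
    exact hfree1 (p5_embed G b v a w z
      hvb.symm hva hwa.symm hwz
      (fun h => hab h.symm) (fun h => hwb h.symm) (fun h => hb h.symm)
      hnvw (fun h => hzv h.symm) (fun h => ha h.symm))

theorem stmt6 (G : SimpleGraph V)
    (hfree1 : HFree (pathGraph 5) G) (hfree2 : HFree ((pathGraph 5)ᶜ) G)
    (u v w : V) (huv : u ≠ v) (huw : u ≠ w) (hvw : v ≠ w)
    (hnuv : ¬ G.Adj u v) (hnuw : ¬ G.Adj u w) (hnvw : ¬ G.Adj v w)
    (A : Set V) (hA : A ⊆ G.neighborSet u ∩ G.neighborSet v)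
    (hanticonn : ((G.induce A)ᶜ).Connected)
    (hmix : Mixed G w A)
    (z : V) (hz : z ∈ G.neighborSet w) (hz' : z ∉ A ∪ {u, v}) :
    ¬ Mixed G z {u, v} := by
  rintro ⟨⟨x, hx, hzx⟩, ⟨y, hy, hzy⟩⟩
  have hzA : z ∉ A := fun h => hz' (Or.inl h)
  have hzu' : z ≠ u := by rintro rfl; exact hz' (by simp)
  have hzv' : z ≠ v := by rintro rfl; exact hz' (by simp)
  have hwz : G.Adj w z := hz
  obtain ⟨a, haA, b, hbA, hwa, hwb, hab⟩ := mixed_anticonn' G A hanticonn w hmix.1 hmix.2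
  have hua : G.Adj u a := (hA haA).1
  have hva : G.Adj v a := (hA haA).2
  have hub : G.Adj u b := (hA hbA).1
  have hvb : G.Adj v b := (hA hbA).2
  have hza : z ≠ a := by rintro rfl; exact hzA haA
  have hzb : z ≠ b := by rintro rfl; exact hzA hbA
  simp only [Set.mem_insert_iff, Set.mem_singleton_iff] at hx hy
  have key : (G.Adj z u ∧ ¬G.Adj z v) ∨ (G.Adj z v ∧ ¬G.Adj z u) := by
    rcases hx with rfl | rfl <;> rcases hy with rfl | rfl
    · exact absurd hzx hzy
    · exact Or.inl ⟨hzx, hzy⟩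
    · exact Or.inr ⟨hzx, hzy⟩
    · exact absurd hzx hzy
  rcases key with ⟨h1, h2⟩ | ⟨h1, h2⟩
  · exact core G hfree1 hfree2 u v w a b z huw hvw hzv' hnuv hnuw hnvw hua hva hub hvb
      hwa hwb hab hwz h1 h2 hza hzb
  · exact core G hfree1 hfree2 v u w a b z hvw huw hzu' (fun h => hnuv h.symm) hnvw hnuw
      hva hua hvb hub hwa hwb hab hwz h1 h2 hza hzb
end

section
/- Let G be a prime graph whose complement is P5-free, and let u, v be non-adjacent vertices of G. Then either N(u) ∩ N(v) is a clique, or there exists a vertex w ∈ V(G)\(N(u) ∪ N(v) ∪ {u,v}) which is mixed on some anticonnected subset of N(u) ∩ N(v). -/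
open SimpleGraph

variable {V : Type*} {W : Type*}

/-
Take a non-edge `a b` inside `C = N(u) ∩ N(v)` and let `A` be the anticomponent of `C` through
`a`. As `|A| ≥ 2` and `u ∉ A`, primality yields a vertex `x ∉ A` mixed on `A`; it lies outside `C`
because `A` is an anticomponent, and it differs from `u, v`, which are complete to `A`. Since `A`
is anticonnected, `x` sees one end `q` of some non-edge `q p` of `A` but not the other. If `x`
were adjacent to `u` but not to `v`, then `q - p - x - v - u` would be an induced `P5` in the
complement; so `x` is adjacent to neither `u` nor `v`.
-/

namespace SimpleGraph

variable {H : SimpleGraph V}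

lemma compl_induce (G : SimpleGraph V) (A : Set V) : (G.induce A)ᶜ = Gᶜ.induce A := by
  ext x y
  simp [Subtype.ext_iff]

lemma exists_maximal_connected_induce [Finite V] {C : Set V} {a : V} (ha : a ∈ C) :
    ∃ A ⊆ C, a ∈ A ∧ (H.induce A).Connected ∧ ∀ y ∈ A, ∀ z ∈ C, H.Adj y z → z ∈ A := by
  obtain ⟨A, ⟨hAC, haA, hconn⟩, hmax⟩ :=
    Set.toFinite {A : Set V | A ⊆ C ∧ a ∈ A ∧ (H.induce A).Connected} |>.exists_maximal
      ⟨{a}, by simpa using ha, by simp [connected_iff_exists_forall_reachable]⟩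
  refine ⟨A, hAC, haA, hconn, fun y hy z hz hyz => ?_⟩
  have hext : (H.induce (A ∪ {y, z})).Connected :=
    induce_union_connected hconn.preconnected (induce_pair_connected_of_adj hyz).preconnected
      ⟨y, hy, by simp⟩
  exact hmax ⟨Set.union_subset hAC (Set.pair_subset (hAC hy) hz), Or.inl haA, hext⟩
    Set.subset_union_left (Or.inr (by simp))

lemma Connected.exists_adj_boundary {A : Set V} (hconn : (H.induce A).Connected)
    (P : V → Prop) {y z : V} (hy : y ∈ A) (hz : z ∈ A) (hPy : P y) (hPz : ¬ P z) :
    ∃ p ∈ A, ∃ q ∈ A, H.Adj p q ∧ P p ∧ ¬ P q := by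
  obtain ⟨d, -, hd, hd'⟩ := (hconn.preconnected ⟨y, hy⟩ ⟨z, hz⟩).some.exists_boundary_dart
    {w | P w.1} hPy hPz
  exact ⟨_, d.fst.2, _, d.snd.2, d.adj, hd, hd'⟩

lemma nonempty_pathGraph_five_embedding {a b c d e : V}
    (hab : H.Adj a b) (hbc : H.Adj b c) (hcd : H.Adj c d) (hde : H.Adj d e)
    (hac : ¬ H.Adj a c) (had : ¬ H.Adj a d) (hae : ¬ H.Adj a e)
    (hbd : ¬ H.Adj b d) (hbe : ¬ H.Adj b e) (hce : ¬ H.Adj c e) :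
    Nonempty (pathGraph 5 ↪g H) := by
  refine ⟨⟨⟨![a, b, c, d, e], ?_⟩, ?_⟩⟩
  · intro i j hij
    fin_cases i <;> fin_cases j <;> simp_all [H.adj_comm]
  · intro i j
    change H.Adj (![a, b, c, d, e] i) (![a, b, c, d, e] j) ↔ _
    fin_cases i <;> fin_cases j <;> simp_all [pathGraph_adj, H.adj_comm]

end SimpleGraph

lemma IsPrimeGraph.exists_mixed [Fintype V] {G : SimpleGraph V} (hG : IsPrimeGraph G)
    {A : Set V} (hA : 1 < A.ncard) {u : V} (hu : u ∉ A) : ∃ x ∉ A, Mixed G x A := by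
  by_contra! h
  have hA' : A.ncard < Fintype.card V :=
    Nat.card_eq_fintype_card (α := V) ▸ Set.ncard_lt_card fun hA => hu (hA ▸ Set.mem_univ u)
  exact hG.2 A ⟨hA, hA', h⟩

lemma Mixed.adj_of_adj_of_pathGraph_five_free {G : SimpleGraph V} {u v x : V} {A : Set V}
    (hmix : Mixed G x A) (hfree : HFree (pathGraph 5) Gᶜ) (hnadj : ¬ G.Adj u v)
    (hA : A ⊆ G.neighborSet u ∩ G.neighborSet v) (hconn : (Gᶜ.induce A).Connected)
    (hux : G.Adj u x) : G.Adj v x := by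
  obtain ⟨⟨y, hy, hxy⟩, ⟨z, hz, hxz⟩⟩ := hmix
  obtain ⟨q, hq, p, hp, hqp, hxq, hxp⟩ := hconn.exists_adj_boundary (G.Adj x) hy hz hxy hxz
  obtain ⟨hqu, hqv⟩ := hA hq
  obtain ⟨hpu, hpv⟩ := hA hp
  by_contra hvx
  have not_compl_adj {s t : V} (h : G.Adj s t) : ¬ Gᶜ.Adj s t := fun h' => h'.2 h
  -- `q - p - x - v - u` is an induced path of `Gᶜ`
  refine hfree (nonempty_pathGraph_five_embedding hqp ?_ ?_ ?_ (not_compl_adj hxq.symm)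
    (not_compl_adj hqv.symm) (not_compl_adj hqu.symm) (not_compl_adj hpv.symm)
    (not_compl_adj hpu.symm) (not_compl_adj hux.symm))
  · exact ⟨by rintro rfl; exact hqp.2 hxq.symm, fun h => hxp h.symm⟩
  · exact ⟨by rintro rfl; exact hnadj hux, fun h => hvx h.symm⟩
  · exact ⟨by rintro rfl; exact hvx hux, fun h => hnadj h.symm⟩

theorem stmt8_general [Fintype V] (G : SimpleGraph V) (hprime : IsPrimeGraph G)
    (hfree : HFree (pathGraph 5) Gᶜ)
    (u v : V) (hnadj : ¬ G.Adj u v) :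
    G.IsClique (G.neighborSet u ∩ G.neighborSet v) ∨
    ∃ w, w ∉ G.neighborSet u ∪ G.neighborSet v ∪ {u, v} ∧
      ∃ A : Set V, A ⊆ G.neighborSet u ∩ G.neighborSet v ∧
        ((G.induce A)ᶜ).Connected ∧ Mixed G w A := by
  refine or_iff_not_imp_left.2 fun hnc => ?_
  obtain ⟨a, ha, b, hb, hab, hnab⟩ : ∃ a ∈ G.neighborSet u ∩ G.neighborSet v,
      ∃ b ∈ G.neighborSet u ∩ G.neighborSet v, a ≠ b ∧ ¬ G.Adj a b := by
    simpa [isClique_iff, Set.Pairwise, and_assoc] using hnc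
  obtain ⟨A, hAC, haA, hconn, hclosed⟩ := exists_maximal_connected_induce (H := Gᶜ) ha
  have hbA : b ∈ A := hclosed a haA b hb ⟨hab, hnab⟩
  have hA : 1 < A.ncard := (Set.one_lt_ncard).2 ⟨a, haA, b, hbA, hab⟩
  obtain ⟨x, hxA, hmix⟩ := hprime.exists_mixed hA (u := u) fun hu => G.irrefl (hAC hu).1
  obtain ⟨z, hz, hxz⟩ := hmix.2
  have hxC : x ∉ G.neighborSet u ∩ G.neighborSet v := fun hx =>
    hxA (hclosed z hz x hx ⟨by rintro rfl; exact hxA hz, fun h => hxz h.symm⟩)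
  have hux : ¬ G.Adj u x := fun hux =>
    hxC ⟨hux, hmix.adj_of_adj_of_pathGraph_five_free hfree hnadj hAC hconn hux⟩
  have hvx : ¬ G.Adj v x := fun hvx =>
    hxC ⟨hmix.adj_of_adj_of_pathGraph_five_free hfree (fun h => hnadj h.symm)
      (Set.inter_comm _ _ ▸ hAC) hconn hvx, hvx⟩
  refine ⟨x, ?_, A, hAC, compl_induce G A ▸ hconn, hmix⟩
  simp only [Set.mem_union, mem_neighborSet, Set.mem_insert_iff, Set.mem_singleton_iff]
  rintro ((h | h) | rfl | rfl)
  exacts [hux h, hvx h, hxz (hAC hz).1, hxz (hAC hz).2]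

theorem stmt8 [Fintype V] (G : SimpleGraph V) (hprime : IsPrimeGraph G)
    (hfree : HFree (pathGraph 5) Gᶜ)
    (u v : V) (huv : u ≠ v) (hnadj : ¬ G.Adj u v) :
    G.IsClique (G.neighborSet u ∩ G.neighborSet v) ∨
    ∃ w, w ∉ G.neighborSet u ∪ G.neighborSet v ∪ {u, v} ∧
      ∃ A : Set V, A ⊆ G.neighborSet u ∩ G.neighborSet v ∧
        ((G.induce A)ᶜ).Connected ∧ Mixed G w A :=
  stmt8_general G hprime hfree u v hnadj
end

section
/- Let G be a prime graph. A vertex v ∈ V(G) is simplicial if and only if v has degree one in every induced copy of P4 in G containing v. -/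
open SimpleGraph

variable {V : Type*} {W : Type*}

/-- `a-b-c-d` is an induced four-vertex path in `G`. -/
def IsInducedP4 (G : SimpleGraph V) (a b c d : V) : Prop :=
  a ≠ b ∧ a ≠ c ∧ a ≠ d ∧ b ≠ c ∧ b ≠ d ∧ c ≠ d ∧
  G.Adj a b ∧ G.Adj b c ∧ G.Adj c d ∧ ¬ G.Adj a c ∧ ¬ G.Adj a d ∧ ¬ G.Adj b d

/-!
A simplicial vertex cannot be an interior vertex of an induced `P4`, since its two path
neighbours would be adjacent. Conversely, if `v` is never interior and `x, y ∈ N(v)` are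
non-adjacent, let `X` be the component of `x` in the complement of `G[N(v)]`. A vertex of
`N(v) \ X` is adjacent to all of `X`, and a vertex `z ∉ N[v]` mixed on an anti-edge `pq` of `X`
would give the induced path `z-p-v-q`. So `X` is a homogeneous set, avoiding `v` and containing
`x, y`.
-/

variable {G : SimpleGraph V} {v : V}

theorem Simplicial.ne_interior_of_isInducedP4 (hv : Simplicial G v) {a b c d : V}
    (h : IsInducedP4 G a b c d) : v ≠ b ∧ v ≠ c := by
  obtain ⟨-, hac, -, -, hbd, -, hab, hbc, hcd, hnac, -, hnbd⟩ := h
  constructor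
  · rintro rfl
    exact hnac (hv hab.symm hbc hac)
  · rintro rfl
    exact hnbd (hv hbc.symm hcd hbd)

def AntiAdjIn (G : SimpleGraph V) (v p q : V) : Prop :=
  G.Adj v p ∧ G.Adj v q ∧ Gᶜ.Adj p q

theorem AntiAdjIn.symm {p q : V} (h : AntiAdjIn G v p q) : AntiAdjIn G v q p :=
  ⟨h.2.1, h.1, h.2.2.symm⟩

/-- The component of `x` in the complement of `G[N(v)]`. -/
def antiComponent (G : SimpleGraph V) (v x : V) : Set V :=
  {u | Relation.ReflTransGen (AntiAdjIn G v) x u}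

theorem isInducedP4_of_antiAdjIn {z p q : V} (hz : z ≠ v) (hzv : ¬ G.Adj v z)
    (hpq : AntiAdjIn G v p q) (hzp : G.Adj z p) (hzq : ¬ G.Adj z q) :
    IsInducedP4 G z p v q := by
  obtain ⟨hvp, hvq, hpq_ne, hnpq⟩ := hpq
  exact ⟨hzp.ne, hz, fun h => hzv (h ▸ hvq), hvp.ne', hpq_ne, hvq.ne, hzp, hvp.symm, hvq,
    fun h => hzv h.symm, hzq, hnpq⟩

theorem adj_of_mem_antiComponent {x u : V} (hx : G.Adj v x) (hu : u ∈ antiComponent G v x) :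
    G.Adj v u := by
  induction hu with
  | refl => exact hx
  | tail _ hpq => exact hpq.2.1

section NeverInterior

variable (hmid : ∀ a b d, ¬ IsInducedP4 G a b v d)
include hmid

theorem adj_iff_of_antiAdjIn {z p q : V} (hz : z ≠ v) (hzv : ¬ G.Adj v z)
    (hpq : AntiAdjIn G v p q) : G.Adj z p ↔ G.Adj z q := by
  constructor
  · exact fun hzp => by_contra fun hzq => hmid _ _ _ (isInducedP4_of_antiAdjIn hz hzv hpq hzp hzq)
  · exact fun hzq => by_contra fun hzp =>
      hmid _ _ _ (isInducedP4_of_antiAdjIn hz hzv hpq.symm hzq hzp)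

theorem adj_iff_of_mem_antiComponent {x z u : V} (hz : z ≠ v) (hzv : ¬ G.Adj v z)
    (hu : u ∈ antiComponent G v x) : G.Adj z u ↔ G.Adj z x := by
  induction hu with
  | refl => rfl
  | tail _ hpq ih => exact (adj_iff_of_antiAdjIn hmid hz hzv hpq).symm.trans ih

theorem not_mixed_antiComponent {x z : V} (hx : G.Adj v x) (hz : z ∉ antiComponent G v x) :
    ¬ Mixed G z (antiComponent G v x) := by
  rintro ⟨⟨u, hu, hzu⟩, ⟨w, hw, hzw⟩⟩
  by_cases hzv : z = v
  · subst hzv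
    exact hzw (adj_of_mem_antiComponent hx hw)
  by_cases hvz : G.Adj v z
  · -- `z` would be joined to `w` by an anti-edge inside `N(v)`
    exact hz (hw.tail ⟨adj_of_mem_antiComponent hx hw, hvz, (G.compl_adj w z).2
      ⟨fun h => hz (h ▸ hw), fun h => hzw h.symm⟩⟩)
  · exact hzw ((adj_iff_of_mem_antiComponent hmid hzv hvz hw).2
      ((adj_iff_of_mem_antiComponent hmid hzv hvz hu).1 hzu))

theorem isHomogeneousSet_antiComponent [Fintype V] {x y : V} (hpq : AntiAdjIn G v x y) :
    IsHomogeneousSet G (antiComponent G v x) := by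
  have hv : v ∉ antiComponent G v x := fun h =>
    G.loopless.irrefl v (adj_of_mem_antiComponent hpq.1 h)
  refine ⟨?_, ?_, fun z hz => not_mixed_antiComponent hmid hpq.1 hz⟩
  · exact (Set.one_lt_ncard (Set.toFinite _)).2
      ⟨x, Relation.ReflTransGen.refl, y, Relation.ReflTransGen.single hpq, hpq.2.2.ne⟩
  · rw [← Nat.card_eq_fintype_card]
    exact Set.ncard_lt_card fun h => hv (h ▸ Set.mem_univ v)

end NeverInterior

theorem stmt12 [Fintype V] (G : SimpleGraph V) (hprime : IsPrimeGraph G) (v : V) :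
    Simplicial G v ↔
      ∀ a b c d, IsInducedP4 G a b c d → (v = a ∨ v = b ∨ v = c ∨ v = d) →
        (v = a ∨ v = d) := by
  constructor
  · intro hv a b c d h hmem
    have := hv.ne_interior_of_isInducedP4 h
    tauto
  · intro hend x hx y hy hxy
    by_contra hnxy
    have hmid : ∀ a b d, ¬ IsInducedP4 G a b v d := by
      intro a b d hP4
      have hv_end := hend a b v d hP4 (by tauto)
      obtain ⟨-, hav, -, -, -, hvd, -⟩ := hP4
      rcases hv_end with rfl | rfl
      exacts [hav rfl, hvd rfl]
    have hanti : AntiAdjIn G v x y := ⟨hx, hy, (G.compl_adj x y).2 ⟨hxy, hnxy⟩⟩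
    exact hprime.2 _ (isHomogeneousSet_antiComponent hmid hanti)
end

section
/- Let G be a prime graph. A vertex v ∈ V(G) is antisimplicial if and only if v has degree two in every induced copy of P4 in G containing v. -/
open SimpleGraph

variable {V : Type*} {W : Type*}

private lemma flip_lemma (G : SimpleGraph V) (S : Set V) (u : V) {a b : ↥S}
    (w : (G.induce S).Walk a b) :
    G.Adj u a → ¬ G.Adj u b →
    ∃ p q : ↥S, G.Adj ↑p ↑q ∧ G.Adj u ↑p ∧ ¬ G.Adj u ↑q := by
  induction w with
  | nil => exact fun ha hb => absurd ha hb
  | @cons a m b h w ih =>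
    intro ha hb
    by_cases hm : G.Adj u ↑m
    · exact ih hm hb
    · exact ⟨a, m, by simpa using h, ha, hm⟩

theorem stmt13 [Fintype V] (G : SimpleGraph V) (hprime : IsPrimeGraph G) (v : V) :
    Antisimplicial G v ↔
      ∀ a b c d, IsInducedP4 G a b c d → (v = a ∨ v = b ∨ v = c ∨ v = d) →
        (v = b ∨ v = c) := by
  constructor
  · intro hanti a b c d hP4 hv
    obtain ⟨hab, hac, had, hbc, hbd, hcd, Gab, Gbc, Gcd, nac, nad, nbd⟩ := hP4
    rcases hv with rfl | h | h | rfl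
    · exfalso
      have := hanti (show c ∈ {u | ¬ G.Adj v u} from nac)
        (show d ∈ {u | ¬ G.Adj v u} from nad) hcd
      rw [compl_adj] at this
      exact this.2 Gcd
    · exact Or.inl h
    · exact Or.inr h
    · exfalso
      have := hanti (show a ∈ {u | ¬ G.Adj v u} from fun h => nad h.symm)
        (show b ∈ {u | ¬ G.Adj v u} from fun h => nbd h.symm) hab
      rw [compl_adj] at this
      exact this.2 Gab
  · intro hmid x hx y hy hxy
    rw [compl_adj]
    refine ⟨hxy, fun hadj => ?_⟩
    simp only [Set.mem_setOf_eq] at hx hy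
    have hxv : x ≠ v := by rintro rfl; exact hy hadj
    have hyv : y ≠ v := by rintro rfl; exact hx hadj.symm
    set S : Set V := {w | ¬ G.Adj v w ∧ w ≠ v} with hS
    have hxS : x ∈ S := ⟨hx, hxv⟩
    have hyS : y ∈ S := ⟨hy, hyv⟩
    set C : Set V := {w | ∃ h : w ∈ S, (G.induce S).Reachable ⟨x, hxS⟩ ⟨w, h⟩} with hC
    have hxC : x ∈ C := ⟨hxS, Reachable.refl _⟩
    have hyC : y ∈ C := ⟨hyS, Adj.reachable (by simpa using hadj)⟩
    have hvC : v ∉ C := fun h => h.1.2 rfl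
    have hclaim : ∀ u ∉ C, ¬ Mixed G u C := by
      rintro u huC ⟨⟨c1, hc1C, hu1⟩, ⟨c2, hc2C, hu2⟩⟩
      obtain ⟨hc1S, hr1⟩ := hc1C
      obtain ⟨hc2S, hr2⟩ := hc2C
      have huv : u ≠ v := by rintro rfl; exact hc1S.1 hu1
      have huS : u ∉ S := by
        intro huS
        exact huC ⟨huS, hr1.trans (Adj.reachable
          (show (G.induce S).Adj ⟨c1, hc1S⟩ ⟨u, huS⟩ by simpa using hu1.symm))⟩
      have hvu : G.Adj v u := by
        by_contra h; exact huS ⟨h, huv⟩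
      obtain ⟨w⟩ := hr1.symm.trans hr2
      obtain ⟨p, q, hpq, hup, huq⟩ := flip_lemma G S u w hu1 hu2
      have hP4 : IsInducedP4 G v u ↑p ↑q :=
        ⟨hvu.ne, fun h => p.2.2 h.symm, fun h => q.2.2 h.symm, hup.ne,
          fun h => huS (h ▸ q.2), hpq.ne, hvu, hup, hpq, p.2.1, q.2.1, huq⟩
      rcases hmid v u ↑p ↑q hP4 (Or.inl rfl) with h | h
      · exact hvu.ne h
      · exact p.2.2 h.symm
    refine hprime.2 C ⟨?_, ?_, hclaim⟩
    · rw [Set.one_lt_ncard_iff C.toFinite]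
      exact ⟨x, y, hxC, hyC, hxy⟩
    · have hss : C ⊂ Set.univ := Set.ssubset_univ_iff.2
        (fun h => hvC (h ▸ Set.mem_univ v))
      have := Set.ncard_lt_ncard hss Set.finite_univ
      rwa [Set.ncard_univ, Nat.card_eq_fintype_card] at this
end

section
/- In a prime graph G, the set of antisimplicial vertices is a clique and the set of simplicial vertices is a stable set. -/
open SimpleGraph

variable {V : Type*} {W : Type*}

theorem stmt14 [Fintype V] (G : SimpleGraph V) (hprime : IsPrimeGraph G) :
    G.IsClique {v | Antisimplicial G v} ∧ Gᶜ.IsClique {v | Simplicial G v} := by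
  obtain ⟨hcard, hhom⟩ := hprime
  constructor
  · intro u hu v hv huv
    by_contra hadj
    apply hhom {u, v}
    refine ⟨?_, ?_, ?_⟩
    · rw [Set.ncard_pair huv]; norm_num
    · rw [Set.ncard_pair huv]; omega
    · rintro w hw ⟨⟨x, hx, hwx⟩, ⟨y, hy, hwy⟩⟩
      simp only [Set.mem_insert_iff, Set.mem_singleton_iff, not_or] at hw hx hy
      obtain ⟨hwu, hwv⟩ := hw
      have key : ∀ a b : V, Antisimplicial G b → a = u ∨ a = v → b = u ∨ b = v →
          a ≠ b → G.Adj w a → ¬ G.Adj w b → False := by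
        intro a b hb ha hbm hab hwa hwb
        have h1 : ¬ G.Adj b a := by
          rcases ha with rfl | rfl <;> rcases hbm with rfl | rfl <;>
            first
            | exact absurd rfl hab
            | exact fun h => hadj h.symm
            | exact fun h => hadj h
        have h2 : ¬ G.Adj b w := fun h => hwb h.symm
        have hne : a ≠ w := by
          rintro rfl
          rcases ha with rfl | rfl
          exacts [hwu rfl, hwv rfl]
        have := hb (by exact h1) (by exact h2) hne
        exact ((compl_adj G a w).mp this).2 hwa.symm
      have hxy : x ≠ y := fun h => hwy (h ▸ hwx)
      have hy' : Antisimplicial G y := by rcases hy with rfl | rfl; exacts [hu, hv]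
      exact key x y hy' hx hy hxy hwx hwy
  · intro u hu v hv huv
    rw [compl_adj]
    refine ⟨huv, fun hadj => ?_⟩
    apply hhom {u, v}
    refine ⟨?_, ?_, ?_⟩
    · rw [Set.ncard_pair huv]; norm_num
    · rw [Set.ncard_pair huv]; omega
    · rintro w hw ⟨⟨x, hx, hwx⟩, ⟨y, hy, hwy⟩⟩
      simp only [Set.mem_insert_iff, Set.mem_singleton_iff, not_or] at hw hx hy
      obtain ⟨hwu, hwv⟩ := hw
      have key : ∀ a b : V, Simplicial G a → a = u ∨ a = v → b = u ∨ b = v →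
          a ≠ b → G.Adj w a → ¬ G.Adj w b → False := by
        intro a b ha hq hbm hab hwa hwb
        have h1 : b ∈ G.neighborSet a := by
          rcases hq with rfl | rfl <;> rcases hbm with rfl | rfl <;>
            first
            | exact absurd rfl hab
            | exact hadj
            | exact hadj.symm
        have h2 : w ∈ G.neighborSet a := hwa.symm
        have hne : w ≠ b := by
          rintro rfl
          rcases hbm with rfl | rfl
          exacts [hwu rfl, hwv rfl]
        exact hwb (ha h2 h1 hne)
      have hxy : x ≠ y := fun h => hwy (h ▸ hwx)
      have hx' : Simplicial G x := by rcases hx with rfl | rfl; exacts [hu, hv]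
      exact key x y hx' hx hy hxy hwx hwy
end
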